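/- Fix r ∈ (0,1). For each n ≥ 1 let X_{1+r}^{(n)} be the n×n lower-triangular Toeplitz matrix with entries 0 above the diagonal, 1 on the diagonal and 1+r below the diagonal. Then ‖X_{1+r}^{(n)}‖/n tends to 2(1+r)/π as n → ∞, where ‖·‖ is the operator norm induced by the Euclidean norm on ℂⁿ. -/

import Mathlib

/-- The operator norm of a complex `n × n` matrix induced by the Euclidean norm on `ℂⁿ`. -/
noncomputable def matNorm {n : ℕ} (T : Matrix (Fin n) (Fin n) ℂ) : ℝ :=
  ‖Matrix.toEuclideanCLM (𝕜 := ℂ) T‖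

/-- The `n × n` lower-triangular Toeplitz matrix `X_β`. -/
noncomputable def Xmat (n : ℕ) (β : ℝ) : Matrix (Fin n) (Fin n) ℂ :=
  Matrix.of fun i j => if (i : ℕ) < (j : ℕ) then 0 else if (i : ℕ) = (j : ℕ) then 1 else (β : ℂ)

/-!
Write `X_β = β J - (β - 1) I` with `J = X_1`, so that `‖X_β‖ = |β| ‖J‖ + O(1)`. The inverse of `J`
is the backward difference matrix `D`, and `DᴴD` is the second difference matrix with a Dirichlet
condition at one end and a Neumann condition at the other. Its least eigenvalue is
`4 sin² (π / (2 (2n + 1)))`, with the positive eigenvector `(sin (i π / (2n + 1)))ᵢ`; hence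
`‖J‖ = 1 / (2 sin (π / (4n + 2))) ∼ 2n / π`.
-/

open Real Finset Filter Topology

noncomputable def sineAngle (n : ℕ) : ℝ := π / (2 * n + 1)

noncomputable def sineVec (n i : ℕ) : ℝ := sin (i * sineAngle n)

/-- The least singular value of the backward difference matrix `(Xmat n 1)⁻¹`. -/
noncomputable def minSingularValue (n : ℕ) : ℝ := 2 * sin (sineAngle n / 2)

lemma sineAngle_pos (n : ℕ) : 0 < sineAngle n := by
  unfold sineAngle; positivity

lemma sineVec_zero (n : ℕ) : sineVec n 0 = 0 := by
  simp [sineVec]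

lemma sineVec_pos {n i : ℕ} (h1 : 1 ≤ i) (h2 : i ≤ n) : 0 < sineVec n i := by
  have hi : (1 : ℝ) ≤ i := by exact_mod_cast h1
  have hin : (i : ℝ) < 2 * n + 1 := by
    have : (i : ℝ) ≤ n := by exact_mod_cast h2
    linarith
  apply sin_pos_of_pos_of_lt_pi (by have := sineAngle_pos n; positivity)
  calc (i : ℝ) * sineAngle n < (2 * n + 1) * sineAngle n :=
        mul_lt_mul_of_pos_right hin (sineAngle_pos n)
    _ = π := by unfold sineAngle; field_simp

lemma sineVec_succ_self (n : ℕ) : sineVec n (n + 1) = sineVec n n := by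
  have h : ((n + 1 : ℕ) : ℝ) * sineAngle n = π - n * sineAngle n := by
    unfold sineAngle; push_cast; field_simp; ring
  rw [sineVec, h, sin_pi_sub, sineVec]

lemma sineVec_add_sineVec_add_two (n i : ℕ) :
    sineVec n i + sineVec n (i + 2) = (2 - minSingularValue n ^ 2) * sineVec n (i + 1) := by
  set θ := sineAngle n
  have hcos : 2 - minSingularValue n ^ 2 = 2 * cos θ := by
    rw [minSingularValue, mul_pow, sin_sq_eq_half_sub, mul_div_cancel₀ θ two_ne_zero]
    ring
  have h0 : (i : ℝ) * θ = ((i + 1 : ℕ) : ℝ) * θ - θ := by push_cast; ring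
  have h2 : ((i + 2 : ℕ) : ℝ) * θ = ((i + 1 : ℕ) : ℝ) * θ + θ := by push_cast; ring
  rw [hcos, sineVec, sineVec, sineVec, h0, h2, sin_sub, sin_add]
  ring

lemma minSingularValue_pos (n : ℕ) : 0 < minSingularValue n := by
  have hθ := sineAngle_pos n
  have hθπ : sineAngle n ≤ π := div_le_self pi_pos.le (by linarith [(n.cast_nonneg : (0:ℝ) ≤ n)])
  exact mul_pos two_pos (sin_pos_of_pos_of_lt_pi (by positivity) (by linarith))

lemma sq_mul_add_sq_mul_le_sq_sub (a b : ℝ) {t : ℝ} (ht : 0 < t) :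
    (1 - t) * a ^ 2 + (1 - t⁻¹) * b ^ 2 ≤ (b - a) ^ 2 := by
  have key : (b - a) ^ 2 - ((1 - t) * a ^ 2 + (1 - t⁻¹) * b ^ 2) = t⁻¹ * (t * a - b) ^ 2 := by
    field_simp; ring
  linarith [mul_nonneg (inv_nonneg.2 ht.le) (sq_nonneg (t * a - b))]

lemma sum_sineVec_sub_sq (n : ℕ) :
    ∑ i ∈ range n, (sineVec n (i + 1) - sineVec n i) ^ 2
      = minSingularValue n ^ 2 * ∑ i ∈ range n, sineVec n (i + 1) ^ 2 := by
  set v := sineVec n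
  set g : ℕ → ℝ := fun i => v i ^ 2 - v i * v (i + 1)
  have htel : ∀ i ∈ range n,
      (v (i + 1) - v i) ^ 2 - minSingularValue n ^ 2 * v (i + 1) ^ 2 = g i - g (i + 1) := by
    intro i _
    linear_combination (-v (i + 1)) * sineVec_add_sineVec_add_two n i
  have h := sum_congr rfl htel
  rw [sum_range_sub', sum_sub_distrib, ← mul_sum] at h
  simp only [g, v, sineVec_zero, sineVec_succ_self] at h
  linarith

lemma weighted_norm_sq_le_norm_sub_sq {E : Type*} [SeminormedAddCommGroup E] (a b : E) {t : ℝ}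
    (ht : 0 < t) : (1 - t) * ‖a‖ ^ 2 + (1 - t⁻¹) * ‖b‖ ^ 2 ≤ ‖b - a‖ ^ 2 :=
  (sq_mul_add_sq_mul_le_sq_sub ‖a‖ ‖b‖ ht).trans <|
    sq_le_sq' (abs_le.1 (abs_norm_sub_norm_le b a)).1 (abs_le.1 (abs_norm_sub_norm_le b a)).2

/-- A discrete Wirtinger inequality: the ratios of consecutive entries of the positive vector
`sineVec n` serve as weights in `weighted_norm_sq_le_norm_sub_sq`, and the recurrence
`sineVec_add_sineVec_add_two` makes the weights on each `‖y i‖ ^ 2` add up to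
`minSingularValue n ^ 2`. -/
theorem minSingularValue_sq_mul_sum_le {E : Type*} [SeminormedAddCommGroup E] (n : ℕ)
    (y : ℕ → E) (hy : y 0 = 0) :
    minSingularValue n ^ 2 * ∑ i ∈ range n, ‖y (i + 1)‖ ^ 2
      ≤ ∑ i ∈ range n, ‖y (i + 1) - y i‖ ^ 2 := by
  set v := sineVec n
  set c : ℕ → ℝ := fun i => 1 - v (i + 1) / v i
  set d : ℕ → ℝ := fun i => 1 - v i / v (i + 1)
  have edge : ∀ i ∈ range n, c i * ‖y i‖ ^ 2 + d i * ‖y (i + 1)‖ ^ 2 ≤ ‖y (i + 1) - y i‖ ^ 2 := by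
    intro i hi
    rcases Nat.eq_zero_or_pos i with rfl | hi0
    · simp [c, d, v, hy, sineVec_zero]
    · have hin : i < n := mem_range.1 hi
      have ht : 0 < v (i + 1) / v i := div_pos (sineVec_pos (by omega) hin) (sineVec_pos hi0 hin.le)
      simpa only [inv_div] using weighted_norm_sq_le_norm_sub_sq (y i) (y (i + 1)) ht
  have hc : ∑ i ∈ range n, c i * ‖y i‖ ^ 2 = ∑ i ∈ range n, c (i + 1) * ‖y (i + 1)‖ ^ 2 := by
    have hcn : c n * ‖y n‖ ^ 2 = 0 := by
      rcases Nat.eq_zero_or_pos n with rfl | hn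
      · simp [hy]
      · simp [c, v, sineVec_succ_self, div_self (sineVec_pos hn le_rfl).ne']
    have h := sum_range_succ' (fun i => c i * ‖y i‖ ^ 2) n
    rw [sum_range_succ, hcn, hy, norm_zero] at h
    simpa using h
  have hcd : ∀ i ∈ range n, c (i + 1) + d i = minSingularValue n ^ 2 := by
    intro i hi
    have hv := (sineVec_pos (n := n) (i := i + 1) (by omega) (mem_range.1 hi)).ne'
    have hrec := sineVec_add_sineVec_add_two n i
    simp only [c, d, v]
    field_simp
    linarith
  calc minSingularValue n ^ 2 * ∑ i ∈ range n, ‖y (i + 1)‖ ^ 2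
      = ∑ i ∈ range n, (c i * ‖y i‖ ^ 2 + d i * ‖y (i + 1)‖ ^ 2) := by
        rw [sum_add_distrib, hc, ← sum_add_distrib, mul_sum]
        exact sum_congr rfl fun i hi => by rw [← hcd i hi]; ring
    _ ≤ _ := sum_le_sum edge

noncomputable def seqOf {n : ℕ} (x : EuclideanSpace ℂ (Fin n)) (k : ℕ) : ℂ :=
  if h : k < n then x ⟨k, h⟩ else 0

noncomputable def partialSum {n : ℕ} (x : EuclideanSpace ℂ (Fin n)) (k : ℕ) : ℂ :=
  ∑ j ∈ range k, seqOf x j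

lemma partialSum_zero {n : ℕ} (x : EuclideanSpace ℂ (Fin n)) : partialSum x 0 = 0 :=
  sum_range_zero _

lemma partialSum_succ_sub {n : ℕ} (x : EuclideanSpace ℂ (Fin n)) (k : ℕ) :
    partialSum x (k + 1) - partialSum x k = seqOf x k :=
  sum_range_succ_sub_sum _

lemma norm_sq_eq_sum_seqOf {n : ℕ} (x : EuclideanSpace ℂ (Fin n)) :
    ‖x‖ ^ 2 = ∑ k ∈ range n, ‖seqOf x k‖ ^ 2 := by
  rw [EuclideanSpace.norm_sq_eq, ← Fin.sum_univ_eq_sum_range]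
  simp [seqOf]

lemma seqOf_toEuclideanCLM_Xmat_one {n : ℕ} (x : EuclideanSpace ℂ (Fin n)) {k : ℕ}
    (hk : k < n) :
    seqOf (Matrix.toEuclideanCLM (𝕜 := ℂ) (Xmat n 1) x) k = partialSum x (k + 1) := by
  have hrange : (range n).filter (· < k + 1) = range (k + 1) := by
    ext j; simp only [mem_filter, mem_range]; omega
  rw [partialSum, ← hrange, sum_filter, ← Fin.sum_univ_eq_sum_range]
  simp only [seqOf, hk, dif_pos, Matrix.ofLp_toEuclideanCLM, Matrix.mulVec, dotProduct]
  refine sum_congr rfl fun j _ => ?_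
  simp only [Xmat, Matrix.of_apply, j.isLt, dif_pos, Fin.eta]
  split_ifs <;> first | omega | simp

lemma norm_toEuclideanCLM_Xmat_one_sq {n : ℕ} (x : EuclideanSpace ℂ (Fin n)) :
    ‖Matrix.toEuclideanCLM (𝕜 := ℂ) (Xmat n 1) x‖ ^ 2
      = ∑ k ∈ range n, ‖partialSum x (k + 1)‖ ^ 2 := by
  rw [norm_sq_eq_sum_seqOf]
  exact sum_congr rfl fun k hk => by rw [seqOf_toEuclideanCLM_Xmat_one x (mem_range.1 hk)]

lemma minSingularValue_mul_norm_toEuclideanCLM_Xmat_one_le {n : ℕ}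
    (x : EuclideanSpace ℂ (Fin n)) :
    minSingularValue n * ‖Matrix.toEuclideanCLM (𝕜 := ℂ) (Xmat n 1) x‖ ≤ ‖x‖ := by
  have h := minSingularValue_sq_mul_sum_le n (partialSum x) (partialSum_zero x)
  simp only [partialSum_succ_sub] at h
  rw [← norm_toEuclideanCLM_Xmat_one_sq, ← norm_sq_eq_sum_seqOf, ← mul_pow] at h
  exact le_of_sq_le_sq h (norm_nonneg x)

noncomputable def sineDiff (n : ℕ) : EuclideanSpace ℂ (Fin n) :=
  WithLp.toLp 2 fun i => ((sineVec n (i + 1) - sineVec n i : ℝ) : ℂ)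

lemma seqOf_sineDiff {n k : ℕ} (hk : k < n) :
    seqOf (sineDiff n) k = ((sineVec n (k + 1) - sineVec n k : ℝ) : ℂ) := by
  simp [seqOf, sineDiff, hk]

lemma partialSum_sineDiff {n k : ℕ} (hk : k ≤ n) : partialSum (sineDiff n) k = sineVec n k := by
  rw [partialSum, sum_congr rfl fun j hj => seqOf_sineDiff ((mem_range.1 hj).trans_le hk)]
  push_cast
  rw [sum_range_sub (fun j => (sineVec n j : ℂ)), sineVec_zero, Complex.ofReal_zero, sub_zero]

lemma norm_sineDiff {n : ℕ} :
    ‖sineDiff n‖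
      = minSingularValue n * ‖Matrix.toEuclideanCLM (𝕜 := ℂ) (Xmat n 1) (sineDiff n)‖ := by
  refine (pow_left_inj₀ (norm_nonneg _)
    (mul_nonneg (minSingularValue_pos n).le (norm_nonneg _)) two_ne_zero).1 ?_
  have hx : ∀ k ∈ range n, ‖seqOf (sineDiff n) k‖ ^ 2 = (sineVec n (k + 1) - sineVec n k) ^ 2 :=
    fun k hk => by
      rw [seqOf_sineDiff (mem_range.1 hk), Complex.norm_real, Real.norm_eq_abs, sq_abs]
  have hJx : ∀ k ∈ range n, ‖partialSum (sineDiff n) (k + 1)‖ ^ 2 = sineVec n (k + 1) ^ 2 :=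
    fun k hk => by simp [partialSum_sineDiff (mem_range.1 hk)]
  rw [mul_pow, norm_toEuclideanCLM_Xmat_one_sq, norm_sq_eq_sum_seqOf, sum_congr rfl hx,
    sum_congr rfl hJx, sum_sineVec_sub_sq]

lemma ContinuousLinearMap.opNorm_eq_inv_of_mul_norm_le {𝕜 E F : Type*} [NontriviallyNormedField 𝕜]
    [NormedAddCommGroup E] [NormedAddCommGroup F] [NormedSpace 𝕜 E] [NormedSpace 𝕜 F]
    (T : E →L[𝕜] F) {c : ℝ} (hc : 0 < c) (hle : ∀ x, c * ‖T x‖ ≤ ‖x‖) {x₀ : E} (hx₀ : x₀ ≠ 0)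
    (heq : ‖x₀‖ = c * ‖T x₀‖) : ‖T‖ = c⁻¹ := by
  refine le_antisymm (T.opNorm_le_bound (inv_nonneg.2 hc.le) fun x => ?_) ?_
  · rw [inv_mul_eq_div, le_div_iff₀' hc]
    exact hle x
  · have h : ‖x₀‖ ≤ c * ‖T‖ * ‖x₀‖ :=
      calc ‖x₀‖ = c * ‖T x₀‖ := heq
        _ ≤ c * (‖T‖ * ‖x₀‖) := by gcongr; exact T.le_opNorm x₀
        _ = c * ‖T‖ * ‖x₀‖ := (mul_assoc _ _ _).symm
    rw [inv_le_iff_one_le_mul₀' hc]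
    exact le_of_mul_le_mul_right (by simpa using h) (norm_pos_iff.2 hx₀)

lemma sineDiff_ne_zero {n : ℕ} (hn : 1 ≤ n) : sineDiff n ≠ 0 := by
  intro h
  have h0 := seqOf_sineDiff (k := 0) hn
  have hseq : seqOf (0 : EuclideanSpace ℂ (Fin n)) 0 = 0 := by simp [seqOf]
  rw [h, hseq, zero_add, sineVec_zero, sub_zero] at h0
  exact (sineVec_pos le_rfl hn).ne' (by exact_mod_cast h0.symm)

theorem matNorm_Xmat_one {n : ℕ} (hn : 1 ≤ n) : matNorm (Xmat n 1) = (minSingularValue n)⁻¹ :=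
  ContinuousLinearMap.opNorm_eq_inv_of_mul_norm_le _ (minSingularValue_pos n)
    minSingularValue_mul_norm_toEuclideanCLM_Xmat_one_le (sineDiff_ne_zero hn) norm_sineDiff

lemma Xmat_eq_smul_sub_smul_one (n : ℕ) (β : ℝ) :
    Xmat n β = (β : ℂ) • Xmat n 1 - ((β - 1 : ℝ) : ℂ) • (1 : Matrix (Fin n) (Fin n) ℂ) := by
  ext i j
  simp only [Xmat, Matrix.sub_apply, Matrix.smul_apply, Matrix.one_apply, Matrix.of_apply,
    smul_eq_mul, Fin.ext_iff]
  split_ifs <;> first | omega | push_cast; ring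

lemma abs_matNorm_Xmat_sub_le (n : ℕ) (β : ℝ) :
    |matNorm (Xmat n β) - |β| * matNorm (Xmat n 1)| ≤ |β - 1| := by
  set J := Matrix.toEuclideanCLM (𝕜 := ℂ) (Xmat n 1)
  set I := (1 : EuclideanSpace ℂ (Fin n) →L[ℂ] EuclideanSpace ℂ (Fin n))
  have hX : matNorm (Xmat n β) = ‖(β : ℂ) • J - ((β - 1 : ℝ) : ℂ) • I‖ := by
    rw [matNorm, Xmat_eq_smul_sub_smul_one, map_sub, map_smul, map_smul, map_one]
  have hJ : |β| * matNorm (Xmat n 1) = ‖(β : ℂ) • J‖ := by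
    rw [norm_smul, Complex.norm_real, Real.norm_eq_abs]; rfl
  calc |matNorm (Xmat n β) - |β| * matNorm (Xmat n 1)|
      ≤ ‖((β - 1 : ℝ) : ℂ) • I‖ := by
        rw [hX, hJ, ← norm_neg (((β - 1 : ℝ) : ℂ) • I)]
        simpa using abs_norm_sub_norm_le ((β : ℂ) • J - ((β - 1 : ℝ) : ℂ) • I) ((β : ℂ) • J)
    _ ≤ |β - 1| * 1 := by
        rw [norm_smul, Complex.norm_real, Real.norm_eq_abs]
        exact mul_le_mul_of_nonneg_left ContinuousLinearMap.norm_id_le (abs_nonneg _)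
    _ = |β - 1| := mul_one _

lemma tendsto_natCast_mul_minSingularValue :
    Tendsto (fun n : ℕ => n * minSingularValue n) atTop (𝓝 (π / 2)) := by
  have hangle : Tendsto (fun n : ℕ => sineAngle n / 2) atTop (𝓝 0) := by
    have hden : Tendsto (fun n : ℕ => 2 * (n : ℝ) + 1) atTop atTop :=
      tendsto_atTop_add_const_right _ 1 (tendsto_natCast_atTop_atTop.const_mul_atTop two_pos)
    simpa only [sineAngle, zero_div] using
      ((tendsto_const_nhds (x := π)).div_atTop hden).div_const 2
  have hsinc := (continuous_sinc.tendsto 0).comp hangle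
  rw [sinc_zero] at hsinc
  have h := ((tendsto_natCast_div_add_atTop (1 / 2 : ℝ)).mul hsinc).const_mul (π / 2)
  rw [mul_one, mul_one] at h
  refine h.congr' ((eventually_ne_atTop 0).mono fun n hn => ?_)
  have hx : sineAngle n / 2 ≠ 0 := (half_pos (sineAngle_pos n)).ne'
  rw [Function.comp_apply, sinc_of_ne_zero hx]
  simp only [minSingularValue, sineAngle]
  field_simp

theorem tendsto_matNorm_Xmat_one_div :
    Tendsto (fun n : ℕ => matNorm (Xmat n 1) / n) atTop (𝓝 (2 / π)) := by
  have h := tendsto_natCast_mul_minSingularValue.inv₀ (by positivity)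
  rw [inv_div] at h
  refine h.congr' ((eventually_ge_atTop 1).mono fun n hn => ?_)
  dsimp only
  rw [matNorm_Xmat_one hn, mul_inv, div_eq_mul_inv, mul_comm]

theorem tendsto_matNorm_Xmat_div (β : ℝ) :
    Tendsto (fun n : ℕ => matNorm (Xmat n β) / n) atTop (𝓝 (2 * |β| / π)) := by
  have h := tendsto_matNorm_Xmat_one_div.const_mul |β|
  rw [← mul_div_assoc, mul_comm |β|] at h
  refine h.congr_dist (squeeze_zero (fun _ => dist_nonneg) (fun n => ?_)
    (tendsto_const_div_atTop_nhds_zero_nat |β - 1|))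
  rw [dist_eq_norm, Real.norm_eq_abs, ← mul_div_assoc, ← sub_div, abs_div, Nat.abs_cast,
    abs_sub_comm]
  exact div_le_div_of_nonneg_right (abs_matNorm_Xmat_sub_le n β) n.cast_nonneg

theorem stmt5 (r : ℝ) (hr : r ∈ Set.Ioo (0 : ℝ) 1) :
    Filter.Tendsto (fun n : ℕ => matNorm (Xmat n (1 + r)) / n) Filter.atTop
      (nhds (2 * (1 + r) / Real.pi)) := by
  have hβ : |1 + r| = 1 + r := abs_of_pos (by linarith [hr.1])
  simpa only [hβ] using tendsto_matNorm_Xmat_div (1 + r)
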